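/- Let a : ℝ → ℝ be continuous, nonnegative, and integrable, and 1 < α < 2. Then the functional I(q) = ½‖q‖²_{H^1} − ∫_ℝ a(t)|q|^α dt is bounded from below on H^1(ℝ, ℝ^n); specifically, I(q) ≥ min_{x ≥ 0} (½x² − Cx^α) where C = π^{α/2}∫_ℝ a(t) dt, and this minimum equals ½y² − Cy^α with y = (Cα)^{1/(2−α)}. -/

import Mathlib

/-!
Since `d/dt ‖q‖² = 2⟪q, q'⟫ ≤ ‖q‖² + ‖q'‖²` and `‖q‖²` vanishes at `-∞`, every value `‖q t‖²`
is at most `‖q‖²_{H¹}`. Hence `∫ a ‖q‖^α ≤ (∫ a) ‖q‖_{H¹}^α ≤ C ‖q‖_{H¹}^α`, so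
`I(q) ≥ φ(‖q‖_{H¹})` with `φ x = ½x² − Cx^α`. On `[0, ∞)`, `φ` is minimised at the critical point
`y` with `y^{2-α} = Cα`, which follows from weighted AM–GM `x^α y^{2-α} ≤ (α/2) x² + (1 - α/2) y²`.
-/

open MeasureTheory Filter Real Set Topology

theorem le_integral_of_hasDerivAt_of_le {f f' g : ℝ → ℝ} (hf : ∀ x, HasDerivAt f (f' x) x)
    (hfi : Integrable f) (hf'i : Integrable f') (hg : Integrable g) (hg0 : 0 ≤ g)
    (hf'g : f' ≤ g) (t : ℝ) : f t ≤ ∫ x, g x := by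
  have hlim : Tendsto f atBot (𝓝 0) :=
    tendsto_zero_of_hasDerivAt_of_integrableOn_Iic (a := t) (fun x _ => hf x)
      hf'i.integrableOn hfi.integrableOn
  have hftc : ∫ x in Iic t, f' x = f t := by
    rw [integral_Iic_of_hasDerivAt_of_tendsto' (fun x _ => hf x) hf'i.integrableOn hlim, sub_zero]
  calc f t = ∫ x in Iic t, f' x := hftc.symm
    _ ≤ ∫ x in Iic t, g x := setIntegral_mono hf'i.integrableOn hg.integrableOn hf'g
    _ ≤ ∫ x, g x := setIntegral_le_integral hg (Eventually.of_forall hg0)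

theorem sq_norm_le_integral_sq_norm_add_sq_norm_deriv {E : Type*} [NormedAddCommGroup E]
    [InnerProductSpace ℝ E] [CompleteSpace E] {q : ℝ → E} (hq : Differentiable ℝ q)
    (hqi : Integrable fun t => ‖q t‖ ^ 2 + ‖deriv q t‖ ^ 2) (t : ℝ) :
    ‖q t‖ ^ 2 ≤ ∫ s, ‖q s‖ ^ 2 + ‖deriv q s‖ ^ 2 := by
  have hbound : ∀ s, ‖2 * inner ℝ (q s) (deriv q s)‖ ≤ ‖q s‖ ^ 2 + ‖deriv q s‖ ^ 2 := fun s => by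
    rw [norm_mul, Real.norm_two, Real.norm_eq_abs]
    nlinarith [abs_real_inner_le_norm (q s) (deriv q s), sq_nonneg (‖q s‖ - ‖deriv q s‖)]
  have hmeas : AEStronglyMeasurable (fun s => 2 * inner ℝ (q s) (deriv q s)) :=
    (hq.continuous.aestronglyMeasurable.inner (aestronglyMeasurable_deriv q _)).const_mul 2
  refine le_integral_of_hasDerivAt_of_le (fun s => (hq s).hasDerivAt.norm_sq)
    (hqi.mono' ?_ ?_) (hqi.mono' hmeas (Eventually.of_forall hbound)) hqi
    (fun s => by positivity) (fun s => (le_abs_self _).trans (hbound s)) t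
  · exact hq.continuous.norm.pow 2 |>.aestronglyMeasurable
  · exact Eventually.of_forall fun s => by
      rw [Real.norm_of_nonneg (by positivity)]
      exact le_add_of_nonneg_right (sq_nonneg _)

theorem rpow_mul_rpow_two_sub_le {x y α : ℝ} (hx : 0 ≤ x) (hy : 0 ≤ y) (hα0 : 0 ≤ α)
    (hα2 : α ≤ 2) : x ^ α * y ^ (2 - α) ≤ α / 2 * x ^ 2 + (1 - α / 2) * y ^ 2 := by
  have hamgm := geom_mean_le_arith_mean2_weighted (p₁ := x ^ 2) (p₂ := y ^ 2)
    (by linarith : 0 ≤ α / 2) (by linarith : 0 ≤ 1 - α / 2) (sq_nonneg x) (sq_nonneg y) (by ring)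
  rwa [← rpow_natCast_mul hx, ← rpow_natCast_mul hy, Nat.cast_ofNat,
    mul_div_cancel₀ _ two_ne_zero, mul_sub, mul_one, mul_div_cancel₀ _ two_ne_zero] at hamgm

theorem isMinOn_half_sq_sub_mul_rpow {C α : ℝ} (hC : 0 ≤ C) (hα0 : 0 < α) (hα2 : α < 2) :
    IsMinOn (fun x => 1 / 2 * x ^ 2 - C * x ^ α) (Ici 0) ((C * α) ^ (1 / (2 - α))) := by
  set y := (C * α) ^ (1 / (2 - α))
  have hy0 : 0 ≤ y := rpow_nonneg (mul_nonneg hC hα0.le) _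
  have hy : y ^ (2 - α) = C * α := by
    rw [← rpow_mul (mul_nonneg hC hα0.le), one_div_mul_cancel (by linarith), rpow_one]
  have hCy : C * y ^ α * α = y ^ 2 := by
    rw [mul_right_comm, ← hy, ← rpow_add' hy0 (by norm_num)]
    norm_num
  refine isMinOn_iff.mpr fun x (hx : 0 ≤ x) => le_of_mul_le_mul_right ?_ hα0
  have hCx : C * x ^ α * α ≤ α / 2 * x ^ 2 + (1 - α / 2) * y ^ 2 := by
    calc C * x ^ α * α = x ^ α * y ^ (2 - α) := by rw [hy]; ring
      _ ≤ _ := rpow_mul_rpow_two_sub_le hx hy0 hα0.le hα2.le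
  linear_combination hCx - hCy

theorem stmt_19_general (n : ℕ) (a : ℝ → ℝ) (α : ℝ)
    (ha_nonneg : ∀ t, 0 ≤ a t) (ha_int : Integrable a)
    (hα1 : 1 < α) (hα2 : α < 2) :
    (∀ q : ℝ → EuclideanSpace ℝ (Fin n), Differentiable ℝ q →
      Integrable (fun t => ‖q t‖ ^ 2 + ‖deriv q t‖ ^ 2) →
      Integrable (fun t => a t * ‖q t‖ ^ α) →
      ((1:ℝ)/2) * (∫ t : ℝ, (‖q t‖ ^ 2 + ‖deriv q t‖ ^ 2))
          - (∫ t : ℝ, a t * ‖q t‖ ^ α)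
        ≥ ((1:ℝ)/2) * ((π ^ (α/2) * (∫ t : ℝ, a t) * α) ^ ((1:ℝ)/(2 - α))) ^ 2
          - (π ^ (α/2) * (∫ t : ℝ, a t)) *
            ((π ^ (α/2) * (∫ t : ℝ, a t) * α) ^ ((1:ℝ)/(2 - α))) ^ α) ∧
    (∀ x : ℝ, 0 ≤ x →
      ((1:ℝ)/2) * ((π ^ (α/2) * (∫ t : ℝ, a t) * α) ^ ((1:ℝ)/(2 - α))) ^ 2
          - (π ^ (α/2) * (∫ t : ℝ, a t)) *
            ((π ^ (α/2) * (∫ t : ℝ, a t) * α) ^ ((1:ℝ)/(2 - α))) ^ α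
        ≤ ((1:ℝ)/2) * x ^ 2 - (π ^ (α/2) * (∫ t : ℝ, a t)) * x ^ α) := by
  have hα0 : 0 < α := by linarith
  have hA : 0 ≤ ∫ t, a t := integral_nonneg ha_nonneg
  have hmin := isMinOn_half_sq_sub_mul_rpow (C := π ^ (α / 2) * ∫ t, a t)
    (mul_nonneg (by positivity) hA) hα0 hα2
  refine ⟨fun q hq hqi haqi => ?_, fun x hx => isMinOn_iff.mp hmin x hx⟩
  set N := ∫ t, ‖q t‖ ^ 2 + ‖deriv q t‖ ^ 2
  have hqN : ∀ t, ‖q t‖ ≤ √N := fun t =>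
    le_sqrt_of_sq_le (sq_norm_le_integral_sq_norm_add_sq_norm_deriv hq hqi t)
  -- the embedding bound above has constant `1`, so the factor `π ^ (α / 2) ≥ 1` is pure slack
  have hpot : ∫ t, a t * ‖q t‖ ^ α ≤ π ^ (α / 2) * (∫ t, a t) * √N ^ α :=
    calc ∫ t, a t * ‖q t‖ ^ α ≤ ∫ t, a t * √N ^ α := integral_mono haqi (ha_int.mul_const _)
          fun t => mul_le_mul_of_nonneg_left (by gcongr; exact hqN t) (ha_nonneg t)
      _ = (∫ t, a t) * √N ^ α := integral_mul_const _ _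
      _ ≤ π ^ (α / 2) * (∫ t, a t) * √N ^ α := by
          gcongr
          exact le_mul_of_one_le_left hA (one_le_rpow (by linarith [pi_gt_three]) (by positivity))
  have hφ := isMinOn_iff.mp hmin √N (sqrt_nonneg N)
  rw [sq_sqrt (integral_nonneg fun t => by positivity)] at hφ
  linarith

/-- `I` is bounded from below on `H¹`:
`I(q) ≥ φ(y)` where `φ(x) = ½x² − Cx^α`, `C = π^{α/2}∫a`, `y = (Cα)^{1/(2−α)}`,
and `φ(y) = min_{x ≥ 0} φ(x)`. -/
theorem stmt_19 (n : ℕ) (a : ℝ → ℝ) (α : ℝ)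
    (ha_cont : Continuous a) (ha_nonneg : ∀ t, 0 ≤ a t) (ha_int : Integrable a)
    (hα1 : 1 < α) (hα2 : α < 2) :
    (∀ q : ℝ → EuclideanSpace ℝ (Fin n), Differentiable ℝ q →
      Integrable (fun t => ‖q t‖ ^ 2 + ‖deriv q t‖ ^ 2) →
      Integrable (fun t => a t * ‖q t‖ ^ α) →
      ((1:ℝ)/2) * (∫ t : ℝ, (‖q t‖ ^ 2 + ‖deriv q t‖ ^ 2))
          - (∫ t : ℝ, a t * ‖q t‖ ^ α)
        ≥ ((1:ℝ)/2) * ((π ^ (α/2) * (∫ t : ℝ, a t) * α) ^ ((1:ℝ)/(2 - α))) ^ 2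
          - (π ^ (α/2) * (∫ t : ℝ, a t)) *
            ((π ^ (α/2) * (∫ t : ℝ, a t) * α) ^ ((1:ℝ)/(2 - α))) ^ α) ∧
    (∀ x : ℝ, 0 ≤ x →
      ((1:ℝ)/2) * ((π ^ (α/2) * (∫ t : ℝ, a t) * α) ^ ((1:ℝ)/(2 - α))) ^ 2
          - (π ^ (α/2) * (∫ t : ℝ, a t)) *
            ((π ^ (α/2) * (∫ t : ℝ, a t) * α) ^ ((1:ℝ)/(2 - α))) ^ α
        ≤ ((1:ℝ)/2) * x ^ 2 - (π ^ (α/2) * (∫ t : ℝ, a t)) * x ^ α) :=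
  stmt_19_general n a α ha_nonneg ha_int hα1 hα2
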